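/- arXiv:2108.10058 — 3 statements merged into one kernel-verified Lean document; each statement's English description precedes it below -/
import Mathlib

section
/- Let A ⊆ GL_m(ℝ) be of the form A = L ∩ GL_m(ℝ) for a linear subspace L of m×m real matrices, and suppose the identity matrix lies in A. Then A is a group under matrix multiplication if and only if A is closed under matrix multiplication. -/
/-!
If `A` contains `1` and is closed under products, it contains every power of `a ∈ A`, so the
subspace `L` contains the algebra `ℝ[a]`. By Cayley–Hamilton the inverse of an invertible
matrix is a polynomial in it, hence `a⁻¹ ∈ L`.
-/

open Polynomial

theorem Algebra.adjoin_singleton_le_of_pow_mem {R A : Type*} [CommSemiring R] [Semiring A]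
    [Algebra R A] {L : Submodule R A} {x : A} (h : ∀ k : ℕ, x ^ k ∈ L) :
    Subalgebra.toSubmodule (Algebra.adjoin R {x}) ≤ L := by
  rw [Algebra.adjoin_eq_span, Submodule.span_le]
  rintro _ hy
  obtain ⟨k, rfl⟩ := Submonoid.mem_closure_singleton.mp hy
  exact h k

/-- Cayley–Hamilton: if `χ_M = q X + c` then `q(M) M = -c`, and `c = ± det M`. -/
theorem Matrix.nonsing_inv_mem_adjoin_singleton {n R : Type*} [Fintype n] [DecidableEq n]
    [CommRing R] (M : Matrix n n R) : M⁻¹ ∈ Algebra.adjoin R {M} := by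
  by_cases hdet : IsUnit M.det
  swap
  · rw [M.nonsing_inv_apply_not_isUnit hdet]
    exact Subalgebra.zero_mem _
  set c := M.charpoly.coeff 0
  have hc : IsUnit c := by
    rw [M.det_eq_sign_charpoly_coeff] at hdet
    exact (IsUnit.mul_iff.mp hdet).2
  have hq : aeval M M.charpoly.divX * M = -algebraMap R _ c := by
    have := congrArg (aeval M) M.charpoly.divX_mul_X_add
    rw [Matrix.aeval_self_charpoly, map_add, map_mul, aeval_X, aeval_C] at this
    exact eq_neg_of_add_eq_zero_left this
  have hinv : M⁻¹ = -(↑hc.unit⁻¹ : R) • aeval M M.charpoly.divX := by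
    apply Matrix.inv_eq_left_inv
    rw [Matrix.smul_mul, hq, smul_neg, neg_smul, neg_neg, Algebra.algebraMap_eq_smul_one,
      smul_smul, IsUnit.val_inv_mul, one_smul]
  rw [hinv]
  exact Subalgebra.smul_mem _ (aeval_mem_adjoin_singleton R M) _

/-- A linear subset A = L ∩ GL_m(ℝ) containing the identity is a group (closed
under multiplication and inversion) iff it is closed under multiplication. -/
theorem stmt3 (m : ℕ) (L : Submodule ℝ (Matrix (Fin m) (Fin m) ℝ))
    (A : Set (Matrix (Fin m) (Fin m) ℝ))
    (hA : A = {a | a ∈ L ∧ IsUnit a})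
    (h1 : (1 : Matrix (Fin m) (Fin m) ℝ) ∈ A) :
    ((∀ a ∈ A, ∀ b ∈ A, a * b ∈ A) ∧ (∀ a ∈ A, a⁻¹ ∈ A)) ↔
      (∀ a ∈ A, ∀ b ∈ A, a * b ∈ A) := by
  subst hA
  refine ⟨And.left, fun hmul => ⟨hmul, fun a ha => ?_⟩⟩
  let S : Submonoid (Matrix (Fin m) (Fin m) ℝ) :=
    { carrier := {a | a ∈ L ∧ IsUnit a}
      mul_mem' := fun hx hy => hmul _ hx _ hy
      one_mem' := h1 }
  have hpow (k : ℕ) : a ^ k ∈ L := (S.pow_mem ha k).1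
  exact ⟨Algebra.adjoin_singleton_le_of_pow_mem hpow a.nonsing_inv_mem_adjoin_singleton,
    a.isUnit_nonsing_inv_iff.mpr ha.2⟩
end

section
/- Let G be a directed acyclic graph on vertex set [m] whose edges j → i all satisfy j > i (so adjacency-type matrices are upper triangular). A positive definite matrix Ψ ∈ PD_m is of the form Ψ = (id − Λ)ᵀ Ω^{-1} (id − Λ) with Λ supported on the edges of G (λ_{ij} = 0 unless j → i) and Ω diagonal positive, if and only if the upper triangular Cholesky factor a of Ψ (with positive diagonal, Ψ = aᵀa) satisfies a_{ij} = 0 for all i ≠ j with j not → i in G. -/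
/-!
Both sides describe the same factorizations `Ψ = aᵀ a` with `a = D (1 - Λ)`, `D` positive diagonal:
from the DAG parametrization take `D = Ω^{-1/2}`, and from a Cholesky factor take `D = diag(a)`,
i.e. `Λ = 1 - D⁻¹ a` and `Ω = D⁻²`. Off the diagonal, `a i j = -D i * Λ i j`, so `a` and `Λ` have
the same support, and `Λ` strictly upper triangular makes `a` upper triangular.
-/

open Matrix

namespace Matrix

variable {n : Type*} [Fintype n] [DecidableEq n]

theorem transpose_diagonal_mul_mul_diagonal_mul {R : Type*} [CommRing R] (s : n → R)
    (B : Matrix n n R) :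
    (diagonal s * B)ᵀ * (diagonal s * B) = Bᵀ * diagonal (s * s) * B := by
  rw [transpose_mul, diagonal_transpose, Matrix.mul_assoc, ← Matrix.mul_assoc (diagonal s),
    diagonal_mul_diagonal, ← Matrix.mul_assoc]
  rfl

theorem inv_diagonal_of_ne_zero {K : Type*} [Field K] {ω : n → K} (hω : ∀ i, ω i ≠ 0) :
    (diagonal ω)⁻¹ = diagonal ω⁻¹ := by
  refine inv_eq_left_inv ?_
  rw [diagonal_mul_diagonal, ← diagonal_one]
  exact congrArg diagonal (funext fun i => inv_mul_cancel₀ (hω i))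

theorem exists_upperTriangular_factor_of_dag [LinearOrder n] {Λ : Matrix n n ℝ} {ω : n → ℝ}
    (hΛ : ∀ i j, ¬ i < j → Λ i j = 0) (hω : ∀ i, 0 < ω i) :
    ∃ a : Matrix n n ℝ, (∀ i j, j < i → a i j = 0) ∧ (∀ i, 0 < a i i) ∧
      (1 - Λ)ᵀ * (diagonal ω)⁻¹ * (1 - Λ) = aᵀ * a ∧
      ∀ i j, i ≠ j → Λ i j = 0 → a i j = 0 := by
  set s : n → ℝ := fun i => √(ω i)⁻¹
  have hs : s * s = ω⁻¹ := funext fun i => Real.mul_self_sqrt (inv_pos.2 (hω i)).le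
  refine ⟨diagonal s * (1 - Λ), fun i j hji => ?_, fun i => ?_, ?_, fun i j hij hΛij => ?_⟩
  · simp [diagonal_mul, hji.ne', hΛ i j hji.not_gt]
  · rw [diagonal_mul, sub_apply, one_apply_eq, hΛ i i (lt_irrefl i), sub_zero, mul_one]
    exact Real.sqrt_pos.2 (inv_pos.2 (hω i))
  · rw [transpose_diagonal_mul_mul_diagonal_mul, hs, inv_diagonal_of_ne_zero fun i => (hω i).ne']
  · simp [diagonal_mul, hij, hΛij]

theorem exists_dag_param_of_factor {a : Matrix n n ℝ} (ha : ∀ i, 0 < a i i) :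
    ∃ (Λ : Matrix n n ℝ) (ω : n → ℝ), (∀ i j, (i ≠ j → a i j = 0) → Λ i j = 0) ∧
      (∀ i, 0 < ω i) ∧ aᵀ * a = (1 - Λ)ᵀ * (diagonal ω)⁻¹ * (1 - Λ) := by
  set d : n → ℝ := fun i => a i i
  have hd : ∀ i, d i ≠ 0 := fun i => (ha i).ne'
  refine ⟨1 - diagonal d⁻¹ * a, (d * d)⁻¹, fun i j hij => ?_, fun i => ?_, ?_⟩
  · rcases eq_or_ne i j with rfl | hne
    · simp [diagonal_mul, d, hd i]
    · simp [diagonal_mul, hne, hij hne]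
  · exact inv_pos.2 (mul_pos (ha i) (ha i))
  · have hfactor : diagonal d * (diagonal d⁻¹ * a) = a := by
      have hdd : (fun i => d i * d⁻¹ i) = fun _ => 1 := funext fun i => mul_inv_cancel₀ (hd i)
      rw [← Matrix.mul_assoc, diagonal_mul_diagonal, hdd, diagonal_one, Matrix.one_mul]
    rw [sub_sub_cancel,
      inv_diagonal_of_ne_zero (ω := (d * d)⁻¹) fun i => inv_ne_zero (mul_ne_zero (hd i) (hd i)),
      inv_inv, ← transpose_diagonal_mul_mul_diagonal_mul, hfactor]

end Matrix

open Matrix in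
theorem stmt9_general (m : ℕ) (edge : Fin m → Fin m → Prop)
    (hedge : ∀ j i : Fin m, edge j i → i < j)
    (Ψ : Matrix (Fin m) (Fin m) ℝ) :
    (∃ (Λ : Matrix (Fin m) (Fin m) ℝ) (ω : Fin m → ℝ),
      (∀ i j : Fin m, ¬ edge j i → Λ i j = 0) ∧ (∀ i, 0 < ω i) ∧
      Ψ = (1 - Λ)ᵀ * (Matrix.diagonal ω)⁻¹ * (1 - Λ)) ↔
    (∃ a : Matrix (Fin m) (Fin m) ℝ,
      (∀ i j : Fin m, j < i → a i j = 0) ∧ (∀ i, 0 < a i i) ∧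
      Ψ = aᵀ * a ∧ (∀ i j : Fin m, i ≠ j → ¬ edge j i → a i j = 0)) := by
  constructor
  · rintro ⟨Λ, ω, hΛ, hω, rfl⟩
    obtain ⟨a, htri, hpos, heq, hsupp⟩ :=
      exists_upperTriangular_factor_of_dag (fun i j h => hΛ i j fun he => h (hedge j i he)) hω
    exact ⟨a, htri, hpos, heq, fun i j hij he => hsupp i j hij (hΛ i j he)⟩
  · rintro ⟨a, -, hpos, rfl, hsupp⟩
    obtain ⟨Λ, ω, hΛ, hω, heq⟩ := exists_dag_param_of_factor hpos
    exact ⟨Λ, ω, fun i j he => hΛ i j fun hij => hsupp i j hij he, hω, heq⟩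

open Matrix in
/-- For a DAG on [m] with edges j → i only when i < j, a positive definite Ψ
lies in the DAG model iff its Cholesky factor has zeros off the edge support. -/
theorem stmt9 (m : ℕ) (edge : Fin m → Fin m → Prop)
    (hedge : ∀ j i : Fin m, edge j i → i < j)
    (Ψ : Matrix (Fin m) (Fin m) ℝ) (hΨ : Ψ.PosDef) :
    (∃ (Λ : Matrix (Fin m) (Fin m) ℝ) (ω : Fin m → ℝ),
      (∀ i j : Fin m, ¬ edge j i → Λ i j = 0) ∧ (∀ i, 0 < ω i) ∧
      Ψ = (1 - Λ)ᵀ * (Matrix.diagonal ω)⁻¹ * (1 - Λ)) ↔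
    (∃ a : Matrix (Fin m) (Fin m) ℝ,
      (∀ i j : Fin m, j < i → a i j = 0) ∧ (∀ i, 0 < a i i) ∧
      Ψ = aᵀ * a ∧ (∀ i j : Fin m, i ≠ j → ¬ edge j i → a i j = 0)) :=
  stmt9_general m edge hedge Ψ
end

section
/- Let A be a set of m×m real invertible matrices closed under nonzero scalar multiples, and let Y ∈ ℝ^{m×n}. Then the supremum over a ∈ A of the function ℓ_Y(aᵀa) = log det(aᵀa) − (1/n)‖aY‖² equals +∞ if and only if inf{‖bY‖ : b ∈ A, det(b) = ±1} = 0. -/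
/-!
Every `a ∈ A` is `τ • b` with `τ > 0` and `b = τ⁻¹ • a ∈ A` of determinant `±1`; with `x = τ²`
and `s = ‖bY‖²` the objective becomes `m log x − x s / n`. By `log y ≤ y − 1` this is at most
`m log (m n / s) − m`, attained at `x = m n / s`, so the objective is unbounded exactly when `s`
can be made arbitrarily small.
-/

open Real Matrix

lemma mul_log_sub_mul_le {k c x : ℝ} (hk : 0 < k) (hc : 0 < c) (hx : 0 < x) :
    k * log x - x * c ≤ k * log (k / c) - k := by
  have hlog : log (x / (k / c)) ≤ x / (k / c) - 1 := log_le_sub_one_of_pos (by positivity)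
  rw [log_div hx.ne' (div_pos hk hc).ne'] at hlog
  have hxc : k * (x / (k / c)) = x * c := by field_simp
  nlinarith

lemma exists_pos_abs_det_inv_smul_eq_one {ι : Type*} [Fintype ι] [DecidableEq ι] [Nonempty ι]
    {a : Matrix ι ι ℝ} (ha : a.det ≠ 0) : ∃ t : ℝ, 0 < t ∧ |(t⁻¹ • a).det| = 1 := by
  have hpos : 0 < |a.det| := abs_pos.mpr ha
  have hcard : (Fintype.card ι : ℝ) ≠ 0 := Nat.cast_ne_zero.mpr Fintype.card_ne_zero
  refine ⟨|a.det| ^ (Fintype.card ι : ℝ)⁻¹, rpow_pos_of_pos hpos _, ?_⟩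
  rw [det_smul, abs_mul, abs_pow, abs_inv, abs_of_pos (rpow_pos_of_pos hpos _), inv_pow,
    ← rpow_natCast, ← rpow_mul hpos.le, inv_mul_cancel₀ hcard, rpow_one, inv_mul_cancel₀ hpos.ne']

section

variable {ι κ : Type*} [Fintype ι] [Fintype κ]

lemma sum_sum_sq_smul_mul (t : ℝ) (b : Matrix ι ι ℝ) (Y : Matrix ι κ ℝ) :
    ∑ i, ∑ j, ((t • b) * Y) i j ^ 2 = t ^ 2 * ∑ i, ∑ j, (b * Y) i j ^ 2 := by
  simp only [smul_mul, Matrix.smul_apply, smul_eq_mul, mul_pow, Finset.mul_sum]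

lemma log_det_transpose_mul_smul [DecidableEq ι] {b : Matrix ι ι ℝ} (hb : |b.det| = 1) (t : ℝ) :
    log ((t • b)ᵀ * (t • b)).det = Fintype.card ι * log (t ^ 2) := by
  have hb2 : b.det * b.det = 1 := by rw [← abs_mul_abs_self, hb, one_mul]
  rw [det_mul, det_transpose, det_smul,
    show t ^ Fintype.card ι * b.det * (t ^ Fintype.card ι * b.det) = (t ^ 2) ^ Fintype.card ι by
      rw [mul_mul_mul_comm, hb2, mul_one, ← pow_add, ← pow_mul, two_mul],
    log_pow]

lemma log_det_sub_mul_sum_sum_sq_smul [DecidableEq ι] {b : Matrix ι ι ℝ} (hb : |b.det| = 1)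
    (Y : Matrix ι κ ℝ) (c t : ℝ) :
    log ((t • b)ᵀ * (t • b)).det - c * ∑ i, ∑ j, ((t • b) * Y) i j ^ 2 =
      Fintype.card ι * log (t ^ 2) - t ^ 2 * (c * ∑ i, ∑ j, (b * Y) i j ^ 2) := by
  rw [log_det_transpose_mul_smul hb, sum_sum_sq_smul_mul]
  ring

end

open Matrix in
/-- For A closed under nonzero scalar multiples, the log-likelihood
ℓ_Y(aᵀa) = log det(aᵀa) − (1/n)‖aY‖² is unbounded above over A iff the
infimum of ‖bY‖ over b ∈ A with det b = ±1 is zero. -/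
theorem stmt10 (m n : ℕ) (hm : 0 < m) (hn : 0 < n)
    (A : Set (Matrix (Fin m) (Fin m) ℝ))
    (hAinv : ∀ a ∈ A, IsUnit a)
    (hAscal : ∀ a ∈ A, ∀ t : ℝ, t ≠ 0 → t • a ∈ A)
    (Y : Matrix (Fin m) (Fin n) ℝ) :
    (∀ M : ℝ, ∃ a ∈ A,
      M < Real.log (aᵀ * a).det - (1 / (n : ℝ)) * ∑ i, ∑ j, ((a * Y) i j) ^ 2) ↔
    (∀ ε : ℝ, 0 < ε → ∃ b ∈ A, (b.det = 1 ∨ b.det = -1) ∧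
      ∑ i, ∑ j, ((b * Y) i j) ^ 2 < ε) := by
  have hm' : (0 : ℝ) < m := Nat.cast_pos.mpr hm
  have hn' : (0 : ℝ) < n := Nat.cast_pos.mpr hn
  have : Nonempty (Fin m) := ⟨⟨0, hm⟩⟩
  constructor
  · intro h ε hε
    obtain ⟨a, haA, hM⟩ := h (m * log (m / (ε / n)) - m)
    obtain ⟨t, ht, hb⟩ := exists_pos_abs_det_inv_smul_eq_one ((isUnit_iff_isUnit_det a).mp
      (hAinv a haA)).ne_zero
    refine ⟨t⁻¹ • a, hAscal a haA _ (inv_ne_zero ht.ne'), (abs_eq zero_le_one).mp hb, ?_⟩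
    rw [← smul_inv_smul₀ ht.ne' a, log_det_sub_mul_sum_sum_sq_smul hb, Fintype.card_fin] at hM
    by_contra! hs
    have hbound := mul_log_sub_mul_le hm' (div_pos hε hn') (pow_pos ht 2)
    have hle : t ^ 2 * (ε / n) ≤ t ^ 2 * (1 / n * ∑ i, ∑ j, ((t⁻¹ • a) * Y) i j ^ 2) := by
      rw [one_div_mul_eq_div]
      gcongr
    linarith
  · intro h M
    set x := exp (M / m + 1)
    have hx : 0 < x := exp_pos _
    obtain ⟨b, hbA, hb, hs⟩ := h (m * n / x) (by positivity)
    have hb : |b.det| = 1 := (abs_eq zero_le_one).mpr hb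
    refine ⟨√x • b, hAscal b hbA _ (sqrt_pos.mpr hx).ne', ?_⟩
    rw [log_det_sub_mul_sum_sum_sq_smul hb, Fintype.card_fin, sq_sqrt hx.le]
    have hvalue : m * log x - x * (1 / n * (m * n / x)) = M := by
      simp only [x, log_exp]
      field_simp
      ring
    have hlt : x * (1 / n * ∑ i, ∑ j, (b * Y) i j ^ 2) < x * (1 / n * (m * n / x)) := by
      gcongr
    linarith
end
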